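/- Under the setting of the previous partition (V_0, ..., V_g of vertices lying on s–t paths, induced by the ordered mandatory arcs e1, ..., eg), in the reduced graph G' = (N, E \ E*) there is no arc (u, v) with u ∈ V_i and v ∈ V_j for any i < j. -/

import Mathlib

/-- `p` is a (vertex-simple, directed) path from `s` to `t` in the digraph with arc set `E`. -/
def IsPath {V : Type*} (E : Set (V × V)) (s t : V) (p : List V) : Prop :=
  p ≠ [] ∧ p.head? = some s ∧ p.getLast? = some t ∧ p.Nodup ∧
    p.Chain' (fun a b => (a, b) ∈ E)

/-- The list of arcs traversed by a path, in order. -/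
def arcsOf {V : Type*} (p : List V) : List (V × V) := p.zip p.tail

/-- Arc `e` appears strictly before arc `f` along the path `p`. -/
def Precedes {V : Type*} (p : List V) (e f : V × V) : Prop :=
  ∃ i j : ℕ, i < j ∧ (arcsOf p)[i]? = some e ∧ (arcsOf p)[j]? = some f

section Aux

variable {V : Type*}

lemma arcsOf_nil : arcsOf ([] : List V) = [] := rfl

lemma arcsOf_singleton (x : V) : arcsOf [x] = [] := rfl

lemma arcsOf_cons_cons (x y : V) (l : List V) :
    arcsOf (x :: y :: l) = (x, y) :: arcsOf (y :: l) := rfl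

lemma arcsOf_split (l : List V) (x : V) (r : List V) :
    arcsOf (l ++ x :: r) = arcsOf (l ++ [x]) ++ arcsOf (x :: r) := by
  induction l with
  | nil => simp [arcsOf_singleton]
  | cons a l ih =>
    cases l with
    | nil => simp [arcsOf_cons_cons, arcsOf_singleton]
    | cons b l' =>
      simp only [List.cons_append, arcsOf_cons_cons] at *
      rw [ih]

lemma chain'_iff_arcsOf (R : V → V → Prop) (l : List V) :
    l.Chain' R ↔ ∀ e ∈ arcsOf l, R e.1 e.2 := by
  induction l with
  | nil => simp [arcsOf_nil]; exact List.isChain_nil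
  | cons a l ih =>
    cases l with
    | nil => simp [arcsOf_singleton]; exact List.isChain_singleton _
    | cons b l' =>
      change List.IsChain R (a :: b :: l') ↔ _
      change List.IsChain R (b :: l') ↔ _ at ih
      rw [List.isChain_cons_cons, ih, arcsOf_cons_cons]
      constructor
      · rintro ⟨h1, h2⟩ e he
        rcases List.mem_cons.mp he with rfl | he
        · exact h1
        · exact h2 e he
      · intro h
        exact ⟨h _ List.mem_cons_self, fun e he => h e (List.mem_cons_of_mem _ he)⟩

lemma eq_append_of_mem_arcsOf {e : V × V} {p : List V} (h : e ∈ arcsOf p) :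
    ∃ l r, p = l ++ e.1 :: e.2 :: r := by
  induction p with
  | nil => simp [arcsOf_nil] at h
  | cons a p ih =>
    cases p with
    | nil => simp [arcsOf_singleton] at h
    | cons b p' =>
      rw [arcsOf_cons_cons, List.mem_cons] at h
      rcases h with rfl | h
      · exact ⟨[], p', rfl⟩
      · obtain ⟨l, r, hl⟩ := ih h
        exact ⟨a :: l, r, by rw [List.cons_append, ← hl]⟩

lemma arcsOf_getElem? {p : List V} {n : ℕ} {x y : V} :
    (arcsOf p)[n]? = some (x, y) ↔ p[n]? = some x ∧ p[n + 1]? = some y := by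
  unfold arcsOf
  rw [List.getElem?_zip_eq_some, List.getElem?_tail]

lemma arcsOf_length (p : List V) : (arcsOf p).length = p.length - 1 := by
  unfold arcsOf
  rw [List.length_zip, List.length_tail]
  omega

lemma getElem?_arcsOf_inj {p : List V} (hp : p.Nodup) {m n : ℕ} {e : V × V}
    (hm : (arcsOf p)[m]? = some e) (hn : (arcsOf p)[n]? = some e) : m = n := by
  obtain ⟨x, y⟩ := e
  rw [arcsOf_getElem?] at hm hn
  have hlt : m < p.length := (List.getElem?_eq_some_iff.mp hm.1).1
  exact (List.getElem?_inj hlt hp).mp (hm.1.trans hn.1.symm)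

lemma arcsOf_getElem?_split (l : List V) (x y : V) (r : List V) :
    (arcsOf (l ++ x :: y :: r))[l.length]? = some (x, y) := by
  have hlen : (arcsOf (l ++ [x])).length = l.length := by
    rw [arcsOf_length]; simp
  rw [arcsOf_split, List.getElem?_append_right hlen.le, hlen, Nat.sub_self, arcsOf_cons_cons]
  simp

lemma exists_getElem?_append_left {α : Type*} {A B : List α} {e : α} (h : e ∈ A) :
    ∃ q < A.length, (A ++ B)[q]? = some e := by
  obtain ⟨q, hq⟩ := List.mem_iff_getElem?.mp h
  have hlt := (List.getElem?_eq_some_iff.mp hq).1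
  refine ⟨q, hlt, ?_⟩
  rw [List.getElem?_append, if_pos hlt]
  exact hq

lemma exists_getElem?_append_right {α : Type*} {A B : List α} {e : α} (h : e ∈ B) :
    ∃ q, (A ++ B)[A.length + q]? = some e := by
  obtain ⟨q, hq⟩ := List.mem_iff_getElem?.mp h
  refine ⟨q, ?_⟩
  rw [List.getElem?_append_right (Nat.le_add_right _ _), Nat.add_sub_cancel_left]
  exact hq

/-- A walk (not necessarily simple) from `s` to `t`. -/
def IsWalk (E : Set (V × V)) (s t : V) (w : List V) : Prop :=
  w ≠ [] ∧ w.head? = some s ∧ w.getLast? = some t ∧ w.Chain' (fun a b => (a, b) ∈ E)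

lemma head?_append_cons (l : List V) (x : V) (r : List V) :
    (l ++ x :: r).head? = (l ++ [x]).head? := by
  cases l <;> simp

lemma getLast?_append_cons (l : List V) (x : V) (r : List V) :
    (l ++ x :: r).getLast? = (x :: r).getLast? := by
  rw [List.getLast?_append, List.getLast?_eq_getLast (l := x :: r) (by simp)]
  rfl

lemma IsWalk.mono {E F : Set (V × V)} (hEF : E ⊆ F) {s t : V} {w : List V}
    (h : IsWalk E s t w) : IsWalk F s t w :=
  ⟨h.1, h.2.1, h.2.2.1, h.2.2.2.imp fun _ _ hab => hEF hab⟩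

lemma isWalk_prefix {E : Set (V × V)} {s t x : V} {l r p : List V}
    (hp : IsPath E s t p) (heq : p = l ++ x :: r) : IsWalk E s x (l ++ [x]) := by
  obtain ⟨hne, hh, hl, _, hc⟩ := hp
  subst heq
  refine ⟨by simp, ?_, List.getLast?_concat, List.IsChain.prefix hc ⟨r, by simp⟩⟩
  rw [← head?_append_cons l x r]
  exact hh

lemma isWalk_suffix {E : Set (V × V)} {s t x : V} {l r p : List V}
    (hp : IsPath E s t p) (heq : p = l ++ x :: r) : IsWalk E x t (x :: r) := by
  obtain ⟨hne, hh, hl, _, hc⟩ := hp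
  subst heq
  refine ⟨by simp, rfl, ?_, List.IsChain.suffix hc ⟨l, rfl⟩⟩
  rw [← getLast?_append_cons l x r]
  exact hl

lemma IsWalk.glue {E : Set (V × V)} {s m t : V} {w₁ w₂ : List V}
    (h₁ : IsWalk E s m w₁) (h₂ : IsWalk E m t w₂) :
    ∃ w, IsWalk E s t w ∧ ∀ e ∈ arcsOf w, e ∈ arcsOf w₁ ∨ e ∈ arcsOf w₂ := by
  obtain ⟨hne₁, hh₁, hl₁, hc₁⟩ := h₁
  obtain ⟨hne₂, hh₂, hl₂, hc₂⟩ := h₂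
  obtain ⟨l, rfl⟩ : ∃ l, w₁ = l ++ [m] := by
    refine ⟨w₁.dropLast, ?_⟩
    have h := List.dropLast_append_getLast hne₁
    rw [List.getLast?_eq_getLast hne₁, Option.some_inj] at hl₁
    rw [← hl₁]
    exact h.symm
  obtain ⟨r, rfl⟩ : ∃ r, w₂ = m :: r := by
    cases w₂ with
    | nil => exact absurd rfl hne₂
    | cons a r =>
      rw [List.head?_cons, Option.some_inj] at hh₂
      exact ⟨r, by rw [hh₂]⟩
  have harc : arcsOf (l ++ m :: r) = arcsOf (l ++ [m]) ++ arcsOf (m :: r) :=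
    arcsOf_split l m r
  refine ⟨l ++ m :: r, ⟨by simp, ?_, ?_, ?_⟩, ?_⟩
  · rw [head?_append_cons l m r]
    exact hh₁
  · rw [getLast?_append_cons l m r]
    exact hl₂
  · rw [chain'_iff_arcsOf] at hc₁ hc₂ ⊢
    intro e he
    rw [harc, List.mem_append] at he
    rcases he with he | he
    · exact hc₁ e he
    · exact hc₂ e he
  · intro e he
    rw [harc, List.mem_append] at he
    exact he

lemma IsWalk.gluePred {E : Set (V × V)} {P : V × V → Prop} {s m t : V} {w₁ w₂ : List V}
    (h₁ : IsWalk E s m w₁) (h₂ : IsWalk E m t w₂)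
    (hp₁ : ∀ e ∈ arcsOf w₁, P e) (hp₂ : ∀ e ∈ arcsOf w₂, P e) :
    ∃ w, IsWalk E s t w ∧ ∀ e ∈ arcsOf w, P e := by
  obtain ⟨w, hw, hsub⟩ := h₁.glue h₂
  exact ⟨w, hw, fun e he => (hsub e he).elim (hp₁ e) (hp₂ e)⟩

lemma arcsOf_shortcut_subset (l₁ l₂ : List V) (x : V) (r : List V) :
    ∀ e ∈ arcsOf (l₁ ++ x :: r), e ∈ arcsOf (l₁ ++ x :: (l₂ ++ x :: r)) := by
  intro e he
  rw [arcsOf_split] at he ⊢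
  rw [List.mem_append] at he ⊢
  rcases he with h | h
  · exact Or.inl h
  · right
    rw [show x :: (l₂ ++ x :: r) = (x :: l₂) ++ x :: r from rfl, arcsOf_split]
    exact List.mem_append_right _ h

lemma exists_isPath_of_isWalk {E : Set (V × V)} {s t : V} :
    ∀ (n : ℕ) (w : List V), w.length ≤ n → IsWalk E s t w →
      ∃ p, IsPath E s t p ∧ ∀ e ∈ arcsOf p, e ∈ arcsOf w := by
  intro n
  induction n with
  | zero =>
    intro w hlen hw
    exact absurd (List.length_eq_zero_iff.mp (Nat.le_zero.mp hlen)) hw.1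
  | succ n ih =>
    intro w hlen hw
    by_cases hnd : w.Nodup
    · exact ⟨w, ⟨hw.1, hw.2.1, hw.2.2.1, hnd, hw.2.2.2⟩, fun e he => he⟩
    · obtain ⟨x, hdup⟩ := List.exists_duplicate_iff_not_nodup.mpr hnd
      rw [List.duplicate_iff_sublist, show [x, x] = [x] ++ [x] from rfl,
        List.append_sublist_iff] at hdup
      obtain ⟨r₁, r₂, hw12, h1, h2⟩ := hdup
      rw [List.singleton_sublist] at h1 h2
      obtain ⟨l₁, l₂, rfl⟩ := List.append_of_mem h1
      obtain ⟨l₃, l₄, rfl⟩ := List.append_of_mem h2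
      have hweq : w = l₁ ++ x :: ((l₂ ++ l₃) ++ x :: l₄) := by
        rw [hw12]; simp
      set w' : List V := l₁ ++ x :: l₄ with hw'
      have hsub : ∀ e ∈ arcsOf w', e ∈ arcsOf w := by
        rw [hweq]
        exact arcsOf_shortcut_subset l₁ (l₂ ++ l₃) x l₄
      have hwalk' : IsWalk E s t w' := by
        obtain ⟨hne, hh, hl, hc⟩ := hw
        refine ⟨by simp [hw'], ?_, ?_, ?_⟩
        · rw [hweq, head?_append_cons] at hh
          rw [hw', head?_append_cons l₁ x l₄]
          exact hh
        · rw [hweq, getLast?_append_cons] at hl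
          rw [hw', getLast?_append_cons l₁ x l₄]
          rw [show x :: ((l₂ ++ l₃) ++ x :: l₄) = (x :: (l₂ ++ l₃)) ++ x :: l₄ from rfl,
            getLast?_append_cons] at hl
          exact hl
        · rw [chain'_iff_arcsOf] at hc ⊢
          intro e he
          exact hc e (hsub e he)
      have hlen' : w'.length ≤ n := by
        have h1 : w.length ≤ n + 1 := hlen
        rw [hweq] at h1
        simp only [hw', List.length_append, List.length_cons] at h1 ⊢
        omega
      obtain ⟨p, hp, hps⟩ := ih w' hlen' hwalk'
      exact ⟨p, hp, fun e he => hsub e (hps e he)⟩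

end Aux

/-- In the reduced graph `E \ E*` there is no arc from `V_i` to `V_j` for `i < j`.
Here `e i = (a i, b i)` are the arcs lying on every `s`–`t` path, appearing in the common
order of their indices; `o i`/`d i` are the origin/destination of the `i`-th segment, and
`V_i` is the set of vertices lying on some `o i`–`d i` path in the reduced graph
`E \ E*`. -/
theorem no_forward_arc {V : Type*} (E : Set (V × V)) (s t : V)
    (g : ℕ) (a b : Fin g → V) (o d : Fin (g + 1) → V)
    (ho0 : o 0 = s) (hdg : d (Fin.last g) = t)
    (hd : ∀ i : Fin g, d i.castSucc = a i) (hob : ∀ i : Fin g, o i.succ = b i)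
    (hmand : ∀ p, IsPath E s t p → ∀ i : Fin g, (a i, b i) ∈ arcsOf p)
    (horder : ∀ p, IsPath E s t p → ∀ i j : Fin g, i < j →
      Precedes p (a i, b i) (a j, b j))
    (hex : ∃ p, IsPath E s t p) :
    ∀ i j : Fin (g + 1), i < j → ∀ u v : V,
      (u, v) ∈ E \ Set.range (fun k => (a k, b k)) →
      u ∈ {w | ∃ p, IsPath (E \ Set.range fun k => (a k, b k)) (o i) (d i) p ∧ w ∈ p} →
      v ∈ {w | ∃ p, IsPath (E \ Set.range fun k => (a k, b k)) (o j) (d j) p ∧ w ∈ p} →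
      False := by
  intro i j hij u v huv hu hv
  obtain ⟨p, hp⟩ := hex
  obtain ⟨pi, hpi, hupi⟩ := hu
  obtain ⟨pj, hpj, hvpj⟩ := hv
  have hpnd : p.Nodup := hp.2.2.2.1
  have hsub : (E \ Set.range fun k => (a k, b k)) ⊆ E := Set.diff_subset
  have hig : (i : ℕ) < g := lt_of_lt_of_le hij (Nat.lt_succ_iff.mp j.isLt)
  set i₀ : Fin g := ⟨(i : ℕ), hig⟩ with hi₀
  have hmem : (a i₀, b i₀) ∈ Set.range (fun k => (a k, b k)) := ⟨i₀, rfl⟩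
  -- the predicate on arcs of our walk
  set P : V × V → Prop := fun e => e ∈ E ∧ e ≠ (a i₀, b i₀) with hP
  -- arcs of reduced-graph walks satisfy P
  have reducedP : ∀ (x y : V) (q : List V),
      q.Chain' (fun c c' => (c, c') ∈ E \ Set.range fun k => (a k, b k)) →
      ∀ e ∈ arcsOf q, P e := by
    intro x y q hc e he
    have h := (chain'_iff_arcsOf _ q).mp hc e he
    rw [Prod.mk.eta] at h
    refine ⟨hsub h, ?_⟩
    rintro rfl
    exact h.2 hmem
  -- Claim L : a walk from s to u all of whose arcs satisfy P
  have claimL : ∃ wl, IsWalk E s u wl ∧ ∀ e ∈ arcsOf wl, P e := by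
    obtain ⟨L₁, L₂, hpieq⟩ := List.append_of_mem hupi
    have w2 : IsWalk (E \ Set.range fun k => (a k, b k)) (o i) u (L₁ ++ [u]) :=
      isWalk_prefix hpi hpieq
    have harc2 : ∀ e ∈ arcsOf (L₁ ++ [u]), P e :=
      reducedP (o i) u _ w2.2.2.2
    have w2' : IsWalk E (o i) u (L₁ ++ [u]) := w2.mono hsub
    by_cases hi0 : i = 0
    · rw [hi0, ho0] at w2'
      exact ⟨L₁ ++ [u], w2', harc2⟩
    · obtain ⟨k, rfl⟩ := Fin.eq_succ_of_ne_zero hi0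
      have hk : k < i₀ := by
        rw [Fin.lt_def]
        simp [hi₀, Fin.val_succ]
      obtain ⟨R₁, R₂, hpeq⟩ := eq_append_of_mem_arcsOf (hmand p hp k)
      have hpeq' : p = (R₁ ++ [a k]) ++ b k :: R₂ := by rw [hpeq]; simp
      have w1 : IsWalk E s (b k) ((R₁ ++ [a k]) ++ [b k]) := isWalk_prefix hp hpeq'
      have harc1 : ∀ e ∈ arcsOf ((R₁ ++ [a k]) ++ [b k]), P e := by
        intro e he
        have hsplit : arcsOf p = arcsOf ((R₁ ++ [a k]) ++ [b k]) ++ arcsOf (b k :: R₂) := by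
          rw [hpeq']; exact arcsOf_split _ _ _
        constructor
        · have hmemp : e ∈ arcsOf p := by rw [hsplit]; exact List.mem_append_left _ he
          have h := (chain'_iff_arcsOf _ p).mp hp.2.2.2.2 e hmemp
          rwa [Prod.mk.eta] at h
        · rintro rfl
          obtain ⟨q, hqlt, hq⟩ := exists_getElem?_append_left (B := arcsOf (b k :: R₂)) he
          rw [← hsplit] at hq
          have hqlen : (arcsOf ((R₁ ++ [a k]) ++ [b k])).length = R₁.length + 1 := by
            rw [arcsOf_length]; simp
          obtain ⟨m, n, hmn, hm, hn⟩ := horder p hp k i₀ hk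
          have hkpos : (arcsOf p)[R₁.length]? = some (a k, b k) := by
            rw [hpeq]; exact arcsOf_getElem?_split _ _ _ _
          have hm' : m = R₁.length := getElem?_arcsOf_inj hpnd hm hkpos
          have hn' : n = q := getElem?_arcsOf_inj hpnd hn hq
          omega
      have hbk : o k.succ = b k := hob k
      rw [hbk] at w2'
      exact w1.gluePred w2' harc1 harc2
  -- Claim R : a walk from v to t all of whose arcs satisfy P
  have claimR : ∃ wr, IsWalk E v t wr ∧ ∀ e ∈ arcsOf wr, P e := by
    obtain ⟨M₁, M₂, hpjeq⟩ := List.append_of_mem hvpj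
    have w2 : IsWalk (E \ Set.range fun k => (a k, b k)) v (d j) (v :: M₂) :=
      isWalk_suffix hpj hpjeq
    have harc2 : ∀ e ∈ arcsOf (v :: M₂), P e := reducedP v (d j) _ w2.2.2.2
    have w2' : IsWalk E v (d j) (v :: M₂) := w2.mono hsub
    by_cases hjl : j = Fin.last g
    · rw [hjl, hdg] at w2'
      exact ⟨v :: M₂, w2', harc2⟩
    · have hjg : (j : ℕ) < g := by
        have h1 : (j : ℕ) ≤ g := Nat.lt_succ_iff.mp j.isLt
        rcases lt_or_eq_of_le h1 with h | h
        · exact h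
        · exact absurd (Fin.ext (by simp [h, Fin.val_last])) hjl
      set k' : Fin g := ⟨(j : ℕ), hjg⟩ with hk'
      have hcast : k'.castSucc = j := by
        apply Fin.ext
        simp [hk']
      have hdj : d j = a k' := by rw [← hcast]; exact hd k'
      have hik : i₀ < k' := by
        rw [Fin.lt_def]
        exact hij
      obtain ⟨S₁, S₂, hpeq⟩ := eq_append_of_mem_arcsOf (hmand p hp k')
      have w1 : IsWalk E (a k') t (a k' :: b k' :: S₂) := isWalk_suffix hp hpeq
      have harc1 : ∀ e ∈ arcsOf (a k' :: b k' :: S₂), P e := by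
        intro e he
        have hsplit : arcsOf p = arcsOf (S₁ ++ [a k']) ++ arcsOf (a k' :: b k' :: S₂) := by
          rw [hpeq]; exact arcsOf_split _ _ _
        constructor
        · have hmemp : e ∈ arcsOf p := by rw [hsplit]; exact List.mem_append_right _ he
          have h := (chain'_iff_arcsOf _ p).mp hp.2.2.2.2 e hmemp
          rwa [Prod.mk.eta] at h
        · rintro rfl
          obtain ⟨q, hq⟩ := exists_getElem?_append_right (A := arcsOf (S₁ ++ [a k'])) he
          rw [← hsplit] at hq
          have hqlen : (arcsOf (S₁ ++ [a k'])).length = S₁.length := by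
            rw [arcsOf_length]; simp
          obtain ⟨m, n, hmn, hm, hn⟩ := horder p hp i₀ k' hik
          have hkpos : (arcsOf p)[S₁.length]? = some (a k', b k') := by
            rw [hpeq]; exact arcsOf_getElem?_split _ _ _ _
          have hn' : n = S₁.length := getElem?_arcsOf_inj hpnd hn hkpos
          have hm' : m = (arcsOf (S₁ ++ [a k'])).length + q := getElem?_arcsOf_inj hpnd hm hq
          omega
      rw [hdj] at w2'
      exact w2'.gluePred w1 harc2 harc1
  obtain ⟨wl, hwl, hwlP⟩ := claimL
  obtain ⟨wr, hwr, hwrP⟩ := claimR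
  have wm : IsWalk E u v [u, v] := ⟨by simp, rfl, rfl, List.isChain_pair.mpr huv.1⟩
  have hwmP : ∀ e ∈ arcsOf [u, v], P e := by
    intro e he
    rw [show arcsOf [u, v] = [(u, v)] from rfl, List.mem_singleton] at he
    subst he
    refine ⟨huv.1, ?_⟩
    rintro h
    exact huv.2 (h ▸ hmem)
  obtain ⟨w₁, hw₁, hw₁P⟩ := hwl.gluePred wm hwlP hwmP
  obtain ⟨w, hw, hwP⟩ := hw₁.gluePred hwr hw₁P hwrP
  obtain ⟨p', hp', hp's⟩ := exists_isPath_of_isWalk w.length w le_rfl hw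
  exact (hwP _ (hp's _ (hmand p' hp' i₀))).2 rfl
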